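/- arXiv:1802.08389 — 7 statements merged into one kernel-verified Lean document; each statement's English description precedes it below -/
import Mathlib

section
/- Let m be a positive integer and let s, t be positive real numbers such that m/s + m/t < 1 (i.e. the point (m,m) lies in the open region {(x,y) ∈ ℝ²_{≥0} : x/s + y/t < 1}). Then the number of pairs (x,y) of nonnegative integers with x/s + y/t < 1 is at least (4m² + 3m + 3)/2. (In the paper's notation: σ_{2,m} ≥ (4m² + 3m + 3)/2.) -/
/-!
Assume `t > 2m` (otherwise swap the coordinates) and let `m + c < t ≤ m + c + 1` with `c ≥ m`.
Since `x/s + y/t = x (1/s + 1/t) + (y - x)/t` and `1/s + 1/t < 1/m`, the region contains every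
lattice point above the diagonal and under the chord from `(m, m)` to `(0, m + c)`, and every
lattice point below the diagonal and under the line through `(0, m + c + 1)` and `(m, m)`.
These points form hooks with corners `(m - j, m - j)`, `0 ≤ j ≤ m`, of sizes
`2j + 1 + ⌊jc/m⌋ + ⌊jm/(c+1)⌋`. The floor sums are bounded from below by pairing `j` with `P - j`:
the residues of `ja` and `(P - j)a` modulo `P` add up to at most `P`.
-/

open Finset

lemma mul_mod_add_sub_mul_mod_le (a P j : ℕ) (hj : j ≤ P) :
    j * a % P + (P - j) * a % P ≤ P := by
  rcases Nat.eq_zero_or_pos P with rfl | hP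
  · simp_all
  obtain ⟨k, hk⟩ : P ∣ j * a % P + (P - j) * a % P := by
    rw [Nat.dvd_iff_mod_eq_zero, ← Nat.add_mod, ← add_mul, Nat.add_sub_cancel' hj,
      Nat.mul_mod_right]
  have hk2 : P * k < P * 2 := by
    have := Nat.mod_lt (j * a) hP
    have := Nat.mod_lt ((P - j) * a) hP
    omega
  have : k ≤ 1 := by have := Nat.lt_of_mul_lt_mul_left hk2; omega
  calc _ = P * k := hk
    _ ≤ P := by simpa using Nat.mul_le_mul_left P this

lemma two_mul_sum_mul_mod_le (a P n : ℕ) (hn : n ≤ P) :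
    2 * ∑ j ∈ range (n + 1), j * a % P ≤ P * (P - 1) := by
  obtain ⟨Q, rfl⟩ | rfl : (∃ Q, P = Q + 1) ∨ P = 0 := by
    rcases P with _ | Q <;> simp
  swap
  · obtain rfl : n = 0 := by omega
    simp
  let r (j : ℕ) : ℕ := j * a % (Q + 1)
  let g (j : ℕ) : ℕ := r j + r (Q + 1 - j)
  have hsub : ∑ j ∈ range (n + 1), r j ≤ ∑ j ∈ range (Q + 2), r j :=
    sum_le_sum_of_subset (range_subset_range.2 (by omega))
  have hpair : 2 * ∑ j ∈ range (Q + 2), r j = ∑ j ∈ range (Q + 2), g j := by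
    rw [sum_add_distrib, ← sum_range_reflect r (Q + 2), two_mul]
    rfl
  have hends : ∑ j ∈ range (Q + 2), g j = ∑ j ∈ range Q, g (j + 1) := by
    rw [sum_range_succ, sum_range_succ']
    simp [g, r]
  have hmid : ∑ j ∈ range Q, g (j + 1) ≤ Q * (Q + 1) := by
    refine (sum_le_card_nsmul (range Q) (fun j => g (j + 1)) (Q + 1) fun j hj =>
      mul_mod_add_sub_mul_mod_le a (Q + 1) (j + 1) (by rw [mem_range] at hj; omega)).trans ?_
    simp
  rw [Nat.add_sub_cancel, Nat.mul_comm (Q + 1)]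
  change 2 * ∑ j ∈ range (n + 1), r j ≤ _
  omega

lemma mul_le_two_mul_sum_div (a P n : ℕ) (hn : n ≤ P) :
    a * (n * (n + 1)) ≤ 2 * P * ∑ j ∈ range (n + 1), j * a / P + P * (P - 1) := by
  have hsplit : (∑ j ∈ range (n + 1), j) * a =
      P * ∑ j ∈ range (n + 1), j * a / P + ∑ j ∈ range (n + 1), j * a % P := by
    rw [sum_mul, mul_sum, ← sum_add_distrib]
    exact sum_congr rfl fun j _ => (Nat.div_add_mod _ _).symm
  have hgauss := sum_range_id_mul_two (n + 1)
  have := two_mul_sum_mul_mod_le a P n hn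
  simp only [Nat.add_sub_cancel] at hgauss
  nlinarith

lemma sum_range_two_mul_add_one (n : ℕ) : ∑ j ∈ range n, (2 * j + 1) = n ^ 2 := by
  induction n with
  | zero => simp
  | succ n ih => rw [sum_range_succ, ih]; ring

def hook (a u v : ℕ) : Finset (ℕ × ℕ) := {a} ×ˢ Icc a u ∪ Ioc a v ×ˢ {a}

lemma min_eq_of_mem_hook {a u v : ℕ} {p : ℕ × ℕ} (hp : p ∈ hook a u v) : min p.1 p.2 = a := by
  simp only [hook, mem_union, mem_product, mem_singleton, mem_Icc, mem_Ioc] at hp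
  omega

lemma card_hook (a u v : ℕ) : #(hook a u v) = (u + 1 - a) + (v - a) := by
  rw [hook, card_union_of_disjoint, card_product, card_product]
  · simp
  · rw [disjoint_left]
    simp only [mem_product, mem_singleton, mem_Icc, mem_Ioc]
    omega

/-- The vertical arms end on the chord from `(m, m)` to `(0, m + c)`, the horizontal arms on the
line through `(0, m + c + 1)` and `(m, m)`. -/
def hookRegion (m c : ℕ) : Finset (ℕ × ℕ) :=
  (range (m + 1)).biUnion fun j => hook (m - j) (m + j * c / m) (m + j * m / (c + 1))

lemma card_hookRegion (m c : ℕ) :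
    #(hookRegion m c) = ∑ j ∈ range (m + 1), (2 * j + 1 + j * c / m + j * m / (c + 1)) := by
  rw [hookRegion, card_biUnion]
  · refine sum_congr rfl fun j hj => ?_
    rw [card_hook]
    generalize j * c / m = x
    generalize j * m / (c + 1) = y
    rw [mem_range] at hj
    omega
  · intro i hi j hj hij
    refine disjoint_left.2 fun p hpi hpj => hij ?_
    have := min_eq_of_mem_hook hpi
    have := min_eq_of_mem_hook hpj
    rw [coe_range, Set.mem_Iio] at hi hj
    omega

lemma le_two_mul_card_hookRegion {m c : ℕ} (hm : 0 < m) (hc : m ≤ c + 1) :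
    4 * m ^ 2 + 3 * m + 3 ≤ 2 * #(hookRegion m c) := by
  have h1 := mul_le_two_mul_sum_div c m m le_rfl
  have h2 := mul_le_two_mul_sum_div m (c + 1) m hc
  rw [card_hookRegion, sum_add_distrib, sum_add_distrib, sum_range_two_mul_add_one]
  set F1 := ∑ j ∈ range (m + 1), j * c / m
  set F2 := ∑ j ∈ range (m + 1), j * m / (c + 1)
  zify [hm] at h1 h2 ⊢
  push_cast at h2
  have h1' : (c : ℤ) * (m + 1) ≤ 2 * F1 + (m - 1) := by
    refine le_of_mul_le_mul_left ?_ (show (0 : ℤ) < m by exact_mod_cast hm)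
    linarith
  -- the remaining slack is `m (c - m) (c - m + 1) / (c + 1)`
  have hslack : 0 ≤ (m : ℤ) * ((c - m) * (c - m + 1)) := by
    rcases le_or_gt m c with h | h
    · have : (m : ℤ) ≤ c := by exact_mod_cast h
      exact mul_nonneg m.cast_nonneg (mul_nonneg (by linarith) (by linarith))
    · obtain rfl : m = c + 1 := by omega
      simp
  refine le_of_mul_le_mul_left ?_ (show (0 : ℤ) < c + 1 by positivity)
  nlinarith

lemma below_chords_of_mem_hookRegion {m c : ℕ} {p : ℕ × ℕ} (hp : p ∈ hookRegion m c) :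
    p.1 ≤ p.2 ∧ m * p.2 + c * p.1 ≤ m * (m + c) ∨
      p.2 ≤ p.1 ∧ (c + 1) * p.1 + m * p.2 ≤ m * (m + c + 1) := by
  obtain ⟨x, y⟩ := p
  simp only [hookRegion, hook, mem_biUnion, mem_range, mem_union, mem_product, mem_singleton,
    mem_Icc, mem_Ioc] at hp
  obtain ⟨j, hj, ⟨rfl, hxy, hy⟩ | ⟨⟨hyx, hx⟩, rfl⟩⟩ := hp
  · have := Nat.mul_div_le (j * c) m
    left
    refine ⟨hxy, ?_⟩
    obtain ⟨i, rfl⟩ : ∃ i, m = j + i := ⟨m - j, by omega⟩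
    simp only [Nat.add_sub_cancel_left] at *
    nlinarith
  · have := Nat.mul_div_le (j * m) (c + 1)
    right
    refine ⟨hyx.le, ?_⟩
    obtain ⟨i, rfl⟩ : ∃ i, m = j + i := ⟨m - j, by omega⟩
    simp only [Nat.add_sub_cancel_left] at *
    nlinarith

lemma div_add_div_lt_one_of_above_diagonal {m c s t x y : ℝ} (hm : 0 < m) (hc : 0 ≤ c)
    (hs : 0 < s) (ht : 0 < t) (h : m / s + m / t < 1) (hct : m + c < t) (hx : 0 ≤ x)
    (hxy : x ≤ y) (hline : m * y + c * x ≤ m * (m + c)) : x / s + y / t < 1 := by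
  rw [div_add_div _ _ hs.ne' ht.ne', div_lt_one (by positivity)] at h ⊢
  have hxm : x ≤ m := by nlinarith
  rcases hx.eq_or_lt with rfl | hx
  · have : y < t := by nlinarith
    nlinarith
  · nlinarith [mul_le_mul_of_nonneg_left hct.le (sub_nonneg.2 hxm)]

lemma div_add_div_lt_one_of_below_diagonal {m c s t x y : ℝ} (hm : 0 < m)
    (hs : 0 < s) (ht : 0 < t) (h : m / s + m / t < 1) (htc : t ≤ m + c + 1) (hy : 0 ≤ y)
    (hyx : y ≤ x) (hline : (c + 1) * x + m * y ≤ m * (m + c + 1)) : x / s + y / t < 1 := by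
  rw [div_add_div _ _ hs.ne' ht.ne', div_lt_one (by positivity)] at h ⊢
  rcases (hy.trans hyx).eq_or_lt with rfl | hx
  · nlinarith
  rcases le_or_gt m x with hxm | hxm
  · nlinarith [mul_le_mul_of_nonneg_left htc (sub_nonneg.2 hxm)]
  · nlinarith

lemma finite_setOf_div_add_div_lt_one {s t : ℝ} (hs : 0 < s) (ht : 0 < t) :
    {p : ℕ × ℕ | (p.1 : ℝ) / s + (p.2 : ℝ) / t < 1}.Finite := by
  refine (Set.finite_Iic (⌊s⌋₊, ⌊t⌋₊)).subset fun p (hp : (p.1 : ℝ) / s + p.2 / t < 1) => ?_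
  have h1 : (p.1 : ℝ) < s := by
    rw [← div_lt_one hs]
    linarith [show (0 : ℝ) ≤ p.2 / t by positivity]
  have h2 : (p.2 : ℝ) < t := by
    rw [← div_lt_one ht]
    linarith [show (0 : ℝ) ≤ p.1 / s by positivity]
  exact Prod.mk_le_mk.2 ⟨Nat.le_floor h1.le, Nat.le_floor h2.le⟩

lemma exists_nat_lt_le_add_one {m : ℕ} {t : ℝ} (ht : 2 * m < t) :
    ∃ c : ℕ, m ≤ c ∧ (m + c : ℝ) < t ∧ t ≤ m + c + 1 := by
  have hq : 2 * m < ⌈t⌉₊ := Nat.lt_ceil.2 (by exact_mod_cast ht)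
  obtain ⟨c, hc⟩ : ∃ c, ⌈t⌉₊ = m + c + 1 := ⟨⌈t⌉₊ - m - 1, by omega⟩
  have hcR : (⌈t⌉₊ : ℝ) = m + c + 1 := by exact_mod_cast hc
  refine ⟨c, by omega, ?_, hcR ▸ Nat.le_ceil t⟩
  linarith [Nat.ceil_lt_add_one ((by positivity : (0 : ℝ) ≤ 2 * m).trans ht.le)]

lemma le_two_mul_ncard_of_two_mul_lt {m : ℕ} (hm : 0 < m) {s t : ℝ} (hs : 0 < s) (ht : 0 < t)
    (h : (m : ℝ) / s + (m : ℝ) / t < 1) (h2m : 2 * m < t) :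
    4 * m ^ 2 + 3 * m + 3 ≤ 2 * {p : ℕ × ℕ | (p.1 : ℝ) / s + (p.2 : ℝ) / t < 1}.ncard := by
  obtain ⟨c, hmc, hct, htc⟩ := exists_nat_lt_le_add_one h2m
  have hmR : (0 : ℝ) < m := by exact_mod_cast hm
  have hsub : (hookRegion m c : Set (ℕ × ℕ)) ⊆ {p | (p.1 : ℝ) / s + (p.2 : ℝ) / t < 1} := by
    intro p hp
    rcases below_chords_of_mem_hookRegion hp with ⟨hxy, hline⟩ | ⟨hyx, hline⟩
    · exact div_add_div_lt_one_of_above_diagonal hmR c.cast_nonneg hs ht h hct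
        p.1.cast_nonneg (by exact_mod_cast hxy) (by exact_mod_cast hline)
    · exact div_add_div_lt_one_of_below_diagonal hmR hs ht h htc
        p.2.cast_nonneg (by exact_mod_cast hyx) (by exact_mod_cast hline)
  have hle := Set.ncard_le_ncard hsub (finite_setOf_div_add_div_lt_one hs ht)
  rw [Set.ncard_coe_finset] at hle
  linarith [le_two_mul_card_hookRegion hm (by omega : m ≤ c + 1)]

/-- σ_{2,m} ≥ (4m² + 3m + 3)/2 : if (m,m) lies in the open region
{(x,y) : x/s + y/t < 1}, then the number of lattice points of that region
is at least (4m² + 3m + 3)/2. -/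
theorem stmt_0 (m : ℕ) (hm : 0 < m) (s t : ℝ) (hs : 0 < s) (ht : 0 < t)
    (h : (m : ℝ) / s + (m : ℝ) / t < 1) :
    (4 * (m : ℝ) ^ 2 + 3 * m + 3) / 2 ≤
      (Set.ncard {p : ℕ × ℕ | (p.1 : ℝ) / s + (p.2 : ℝ) / t < 1} : ℝ) := by
  have hlarge : 2 * m < t ∨ 2 * m < s := by
    by_contra! hsmall
    have : 1 / 2 ≤ (m : ℝ) / s := by rw [le_div_iff₀ hs]; exact_mod_cast (by linarith)
    have : 1 / 2 ≤ (m : ℝ) / t := by rw [le_div_iff₀ ht]; exact_mod_cast (by linarith)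
    linarith
  have hswap : {p : ℕ × ℕ | (p.1 : ℝ) / s + (p.2 : ℝ) / t < 1} =
      Prod.swap '' {p : ℕ × ℕ | (p.1 : ℝ) / t + (p.2 : ℝ) / s < 1} := by
    simp [Set.image_swap_eq_preimage_swap, add_comm]
  have hcount : 4 * m ^ 2 + 3 * m + 3 ≤
      2 * {p : ℕ × ℕ | (p.1 : ℝ) / s + (p.2 : ℝ) / t < 1}.ncard := by
    rcases hlarge with h2m | h2m
    · exact le_two_mul_ncard_of_two_mul_lt hm hs ht h h2m
    · rw [hswap, Set.ncard_image_of_injective _ Prod.swap_injective]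
      exact le_two_mul_ncard_of_two_mul_lt hm ht hs (by linarith) h2m
  have : (4 * m ^ 2 + 3 * m + 3 : ℝ) ≤
      2 * ({p : ℕ × ℕ | (p.1 : ℝ) / s + (p.2 : ℝ) / t < 1}.ncard : ℝ) := by
    exact_mod_cast hcount
  linarith
end

section
/- Let λ be a real number with 0 < λ ≤ 1, let n ≥ 1 be an integer, and let a₁,…,aₙ be positive real numbers with λ·(a₁ + ⋯ + aₙ) < 1. Then the number of points x = (x₁,…,xₙ) with nonnegative integer coordinates satisfying ∑ᵢ aᵢxᵢ < 1 is at least 2^{⌊nλ⌋}. -/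
/-- If 0 < λ ≤ 1 and λ·(a₁ + ⋯ + aₙ) < 1 with all aᵢ > 0, then the number
of lattice points x with ∑ aᵢxᵢ < 1 is at least 2^⌊nλ⌋. -/
theorem stmt_3 (l : ℝ) (hl0 : 0 < l) (hl1 : l ≤ 1) (n : ℕ) (hn : 1 ≤ n)
    (a : Fin n → ℝ) (ha : ∀ i, 0 < a i) (h : l * ∑ i, a i < 1) :
    2 ^ (⌊(n : ℝ) * l⌋₊) ≤ Set.ncard {x : Fin n → ℕ | ∑ i, a i * (x i : ℝ) < 1} := by
  set k : ℕ := ⌊(n : ℝ) * l⌋₊ with hk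
  have hnpos : (0:ℝ) < n := by exact_mod_cast hn
  have htot0 : (0:ℝ) ≤ ∑ i, a i := Finset.sum_nonneg fun i _ => (ha i).le
  have hkn : k ≤ n := by
    have h1 : (n:ℝ) * l ≤ n := by nlinarith
    calc k ≤ ⌊(n:ℝ)⌋₊ := Nat.floor_le_floor h1
      _ = n := Nat.floor_natCast n
  have hkle : (k:ℝ) ≤ (n:ℝ) * l := Nat.floor_le (by positivity)
  set σ := Tuple.sort a with hσ
  set b := a ∘ σ with hb
  have hmono : Monotone b := Tuple.monotone_sort a
  have hb0 : ∀ j, 0 < b j := fun j => ha (σ j)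
  have htoteq : ∑ j, b j = ∑ i, a i := Equiv.sum_comp σ a
  set A : Finset (Fin n) := Finset.univ.filter (fun j : Fin n => (j:ℕ) < k) with hA
  set B : Finset (Fin n) := Finset.univ.filter (fun j : Fin n => ¬ (j:ℕ) < k) with hB
  have hAcard : A.card = k := by
    have : A = Finset.map (Fin.castLEEmb hkn) Finset.univ := by
      ext j
      simp only [hA, Finset.mem_filter, Finset.mem_univ, true_and, Finset.mem_map,
        Fin.castLEEmb_apply]
      constructor
      · intro hj
        exact ⟨⟨(j:ℕ), hj⟩, by ext; simp⟩
      · rintro ⟨i, -, rfl⟩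
        exact i.isLt
    rw [this, Finset.card_map, Finset.card_univ, Fintype.card_fin]
  have hBcard : B.card = n - k := by
    have h2 : A.card + B.card = n := by
      rw [hA, hB, Finset.card_filter_add_card_filter_not, Finset.card_univ,
        Fintype.card_fin]
    omega
  set H : ℝ := ∑ j ∈ A, b j with hH
  set T : ℝ := ∑ j ∈ B, b j with hT
  have hHT : H + T = ∑ i, a i := by
    rw [hH, hT, Finset.sum_filter_add_sum_filter_not, htoteq]
  have hT0 : 0 ≤ T := Finset.sum_nonneg fun j _ => (hb0 j).le
  have hcross : ((n - k : ℕ) : ℝ) * H ≤ (k : ℝ) * T := by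
    have h3 : ∑ j ∈ A, ∑ m ∈ B, b j ≤ ∑ j ∈ A, ∑ m ∈ B, b m := by
      apply Finset.sum_le_sum
      intro j hj
      apply Finset.sum_le_sum
      intro m hm
      apply hmono
      simp only [hA, hB, Finset.mem_filter] at hj hm
      exact le_of_lt (Fin.lt_iff_val_lt_val.mpr (lt_of_lt_of_le hj.2 (le_of_not_gt hm.2)))
    calc ((n - k : ℕ) : ℝ) * H = ∑ j ∈ A, ∑ m ∈ B, b j := by
          rw [hH, Finset.mul_sum]
          congr 1; ext j
          rw [Finset.sum_const, hBcard, nsmul_eq_mul]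
      _ ≤ ∑ j ∈ A, ∑ m ∈ B, b m := h3
      _ = (k : ℝ) * T := by
          rw [Finset.sum_const, hAcard, nsmul_eq_mul]
  have hsub : ((n - k : ℕ) : ℝ) = (n : ℝ) - k := by
    rw [Nat.cast_sub hkn]
  have hH1 : H < 1 := by
    have h4 : (n : ℝ) * H ≤ (k : ℝ) * (H + T) := by
      rw [hsub] at hcross; nlinarith
    have h5 : (k : ℝ) * (H + T) ≤ (n : ℝ) * (l * ∑ i, a i) := by
      rw [hHT]
      nlinarith [mul_le_mul_of_nonneg_right hkle htot0]
    have h6 : (n : ℝ) * H < (n : ℝ) * 1 := by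
      calc (n:ℝ) * H ≤ (n:ℝ) * (l * ∑ i, a i) := le_trans h4 h5
        _ < (n:ℝ) * 1 := by nlinarith
    exact lt_of_mul_lt_mul_left h6 hnpos.le
  -- the injection: subsets of A ↦ indicator vectors
  set φ : Finset (Fin n) → (Fin n → ℕ) := fun t i => if i ∈ t.image σ then 1 else 0 with hφ
  set F : Finset (Fin n → ℕ) := A.powerset.image φ with hF
  have hφinj : Set.InjOn φ A.powerset := by
    intro s hs t ht hst
    have : s.image σ = t.image σ := by
      ext i
      have := congrFun hst i
      simp only [hφ] at this
      by_contra hc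
      by_cases h1 : i ∈ Finset.image σ s <;> by_cases h2 : i ∈ Finset.image σ t <;>
        simp [h1, h2] at this hc ⊢
    have hsi : s = t := by
      have := Finset.image_injective σ.injective this
      exact this
    exact hsi
  have hFcard : F.card = 2 ^ k := by
    rw [hF, Finset.card_image_of_injOn hφinj, Finset.card_powerset, hAcard]
  have hFsub : (F : Set (Fin n → ℕ)) ⊆ {x : Fin n → ℕ | ∑ i, a i * (x i : ℝ) < 1} := by
    intro x hx
    simp only [hF, Finset.coe_image, Set.mem_image, Finset.mem_coe, Finset.mem_powerset] at hx
    obtain ⟨t, ht, rfl⟩ := hx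
    simp only [Set.mem_setOf_eq]
    have heq : ∑ i, a i * ((φ t i : ℕ) : ℝ) = ∑ i ∈ t.image σ, a i := by
      simp only [hφ]
      push_cast
      simp only [mul_ite, mul_one, mul_zero]
      rw [Finset.sum_ite_mem, Finset.univ_inter]
    rw [heq]
    have hsub2 : ∑ i ∈ t.image σ, a i ≤ ∑ i ∈ A.image σ, a i :=
      Finset.sum_le_sum_of_subset_of_nonneg (Finset.image_subset_image ht)
        (fun i _ _ => (ha i).le)
    have hAim : ∑ i ∈ A.image σ, a i = H := by
      rw [hH, Finset.sum_image (fun x _ y _ hxy => σ.injective hxy)]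
      rfl
    calc ∑ i ∈ t.image σ, a i ≤ ∑ i ∈ A.image σ, a i := hsub2
      _ = H := hAim
      _ < 1 := hH1
  -- finiteness
  have hfin : {x : Fin n → ℕ | ∑ i, a i * (x i : ℝ) < 1}.Finite := by
    apply Set.Finite.subset (Set.Finite.pi (fun i : Fin n => Set.finite_Iic (⌊1 / a i⌋₊)))
    intro x hx
    simp only [Set.mem_setOf_eq] at hx
    intro i _
    simp only [Set.mem_Iic]
    apply Nat.le_floor
    rw [le_div_iff₀ (ha i)]
    have h7 : a i * (x i : ℝ) ≤ ∑ j, a j * (x j : ℝ) :=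
      Finset.single_le_sum (fun j _ => mul_nonneg (ha j).le (Nat.cast_nonneg _))
        (Finset.mem_univ i)
    nlinarith
  calc (2:ℕ) ^ k = F.card := hFcard.symm
    _ = (F : Set (Fin n → ℕ)).ncard := (Set.ncard_coe_finset F).symm
    _ ≤ Set.ncard {x : Fin n → ℕ | ∑ i, a i * (x i : ℝ) < 1} :=
        Set.ncard_le_ncard hFsub hfin
end

section
/- Fix a real number λ > 0. Then there exist a real constant c > 1 and a natural number N such that for every integer n ≥ N and all positive real numbers a₁,…,aₙ with λ·(a₁ + ⋯ + aₙ) < 1, the number of points x = (x₁,…,xₙ) with nonnegative integer coordinates satisfying ∑ᵢ aᵢxᵢ < 1 is strictly greater than cⁿ. (In the paper's notation: for fixed λ > 0 there exists c > 1 with σ_{n,λ} > cⁿ for all sufficiently large n.) -/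
/-!
Write `δ = λ / (λ + 1)` and `k = ⌊δ n⌋`. Since the weights sum to less than `1 / λ`, at most
`k / λ` of them satisfy `k aᵢ ≥ 1`, so at least `n - k / λ ≥ k` of them are below `1 / k`.
Any `k` of them sum to less than `1`, and the `2 ^ k` indicator vectors of subsets of
these `k` coordinates are lattice points of `Q_a`. Finally `2 ^ ⌊δ n⌋` eventually
beats `cⁿ` for `c = 2 ^ (δ / 2)`.
-/

open Finset

variable {ι : Type*} [Fintype ι]

def latticePoints (a : ι → ℝ) : Set (ι → ℕ) :=
  {x | ∑ i, a i * (x i : ℝ) < 1}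

theorem latticePoints_finite {a : ι → ℝ} (ha : ∀ i, 0 < a i) : (latticePoints a).Finite := by
  classical
  refine (Set.finite_Icc (0 : ι → ℕ) fun i => ⌊1 / a i⌋₊).subset
    fun x hx => ⟨fun _ => Nat.zero_le _, fun i => ?_⟩
  have hxi : a i * (x i : ℝ) ≤ ∑ j, a j * (x j : ℝ) :=
    single_le_sum (fun j _ => mul_nonneg (ha j).le (Nat.cast_nonneg _)) (mem_univ i)
  refine Nat.le_floor ?_
  rw [le_div_iff₀ (ha i), mul_comm]
  exact hxi.trans hx.le

theorem two_pow_card_le_ncard_latticePoints {a : ι → ℝ} (ha : ∀ i, 0 < a i) {s : Finset ι}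
    (hs : ∑ i ∈ s, a i < 1) : 2 ^ #s ≤ (latticePoints a).ncard := by
  classical
  let indicator (t : Finset ι) : ι → ℕ := fun i => if i ∈ t then 1 else 0
  have sum_indicator (t : Finset ι) : ∑ i, a i * (indicator t i : ℝ) = ∑ i ∈ t, a i := by
    simp only [indicator, Nat.cast_ite, Nat.cast_one, Nat.cast_zero, mul_ite, mul_one, mul_zero,
      sum_ite_mem, univ_inter]
  have indicator_injective : Function.Injective indicator := fun t t' h => by
    ext i
    have := congrFun h i
    by_cases hi : i ∈ t <;> by_cases hi' : i ∈ t' <;> simp_all [indicator]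
  rw [← card_powerset, ← Set.ncard_coe_finset]
  refine Set.ncard_le_ncard_of_injOn indicator (fun t ht => ?_) indicator_injective.injOn
    (latticePoints_finite ha)
  have hts : t ⊆ s := mem_powerset.mp ht
  change ∑ i, a i * (indicator t i : ℝ) < 1
  rw [sum_indicator]
  exact (sum_le_sum_of_subset_of_nonneg hts fun i _ _ => (ha i).le).trans_lt hs

theorem exists_card_eq_sum_lt_one {l : ℝ} (hl : 0 < l) {a : ι → ℝ} (ha : ∀ i, 0 ≤ a i)
    (hsum : l * ∑ i, a i < 1) {k : ℕ} (hk : k * (l + 1) ≤ l * Fintype.card ι) :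
    ∃ s : Finset ι, #s = k ∧ ∑ i ∈ s, a i < 1 := by
  classical
  set small := univ.filter fun i => k * a i < 1
  set large := univ.filter fun i => ¬ k * a i < 1
  have card_large : (#large : ℝ) ≤ k * ∑ i, a i := calc
    (#large : ℝ) ≤ ∑ i ∈ large, k * a i := by
      simpa using card_nsmul_le_sum large (fun i => k * a i) 1 fun i hi => not_lt.mp (mem_filter.mp hi).2
    _ ≤ ∑ i, k * a i := sum_le_sum_of_subset_of_nonneg (subset_univ _) fun i _ _ => by
      have := ha i; positivity
    _ = k * ∑ i, a i := (mul_sum ..).symm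
  have card_split : (#small : ℝ) + #large = Fintype.card ι := by
    exact_mod_cast card_filter_add_card_filter_not (s := univ) (fun i => k * a i < 1)
  have hk_small : k ≤ #small := by
    have hl_large : l * #large ≤ k := by nlinarith [(Nat.cast_nonneg k : (0 : ℝ) ≤ k)]
    have hkl : (k : ℝ) * l ≤ #small * l := by nlinarith
    exact_mod_cast le_of_mul_le_mul_right hkl hl
  obtain ⟨s, hs_small, rfl⟩ := exists_subset_card_eq hk_small
  refine ⟨s, rfl, ?_⟩
  rcases s.eq_empty_or_nonempty with rfl | hs
  · simp
  have hks : ∑ i ∈ s, (#s : ℝ) * a i < ∑ i ∈ s, 1 :=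
    sum_lt_sum_of_nonempty hs fun i hi => (mem_filter.mp (hs_small hi)).2
  rw [← mul_sum, sum_const, nsmul_one] at hks
  exact lt_of_mul_lt_mul_left (by simpa using hks) (Nat.cast_nonneg _)

theorem exists_one_lt_pow_lt_two_pow_floor {δ : ℝ} (hδ : 0 < δ) :
    ∃ c : ℝ, 1 < c ∧ ∃ N : ℕ, ∀ n ≥ N, c ^ n < 2 ^ ⌊δ * n⌋₊ := by
  refine ⟨2 ^ (δ / 2), Real.one_lt_rpow one_lt_two (by positivity), ⌈2 / δ⌉₊, fun n hn => ?_⟩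
  have hδn : 2 ≤ δ * n := by
    have h := Nat.ceil_le.mp hn
    rwa [div_le_iff₀ hδ, mul_comm] at h
  rw [← Real.rpow_natCast, ← Real.rpow_mul zero_le_two, ← Real.rpow_natCast 2]
  refine Real.rpow_lt_rpow_of_exponent_lt one_lt_two ?_
  linarith [Nat.lt_floor_add_one (δ * n)]

/-- For fixed λ > 0 there exist c > 1 and N such that σ_{n,λ} > cⁿ for all n ≥ N:
for every n ≥ N and all positive a₁,…,aₙ with λ·∑ aᵢ < 1, the number of lattice
points x with ∑ aᵢxᵢ < 1 is strictly greater than cⁿ. -/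
theorem stmt_4 (l : ℝ) (hl : 0 < l) :
    ∃ c : ℝ, 1 < c ∧ ∃ N : ℕ, ∀ n : ℕ, N ≤ n →
      ∀ a : Fin n → ℝ, (∀ i, 0 < a i) → l * ∑ i, a i < 1 →
        (c : ℝ) ^ n < (Set.ncard {x : Fin n → ℕ | ∑ i, a i * (x i : ℝ) < 1} : ℝ) := by
  obtain ⟨c, hc, N, hN⟩ := exists_one_lt_pow_lt_two_pow_floor (div_pos hl (by linarith : 0 < l + 1))
  refine ⟨c, hc, N, fun n hn a ha hsum => ?_⟩
  set k := ⌊l / (l + 1) * n⌋₊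
  have hk : k * (l + 1) ≤ l * Fintype.card (Fin n) := by
    rw [Fintype.card_fin, ← le_div_iff₀ (by linarith), mul_div_right_comm]
    exact Nat.floor_le (by positivity)
  obtain ⟨s, hs_card, hs⟩ := exists_card_eq_sum_lt_one hl (fun i => (ha i).le) hsum hk
  calc c ^ n < 2 ^ #s := hs_card ▸ hN n hn
    _ ≤ _ := by exact_mod_cast two_pow_card_le_ncard_latticePoints ha hs
end

section
/- Let n ≥ 1 be an integer and let a₁,…,aₙ be positive real numbers. Then the Lebesgue measure of the set Q_a = {x ∈ ℝⁿ : xᵢ ≥ 0 for all i and ∑ᵢ aᵢxᵢ < 1} is at most the number of points with nonnegative integer coordinates lying in Q_a. -/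
open scoped ENNReal

/-- The Lebesgue measure of the open simplex Q_a is at most the number of its
lattice points. -/
theorem stmt_5 (n : ℕ) (hn : 1 ≤ n) (a : Fin n → ℝ) (ha : ∀ i, 0 < a i) :
    MeasureTheory.volume {x : Fin n → ℝ | (∀ i, 0 ≤ x i) ∧ ∑ i, a i * x i < 1}
      ≤ (Set.ncard {x : Fin n → ℕ | ∑ i, a i * (x i : ℝ) < 1} : ℝ≥0∞) := by
  set S : Set (Fin n → ℕ) := {x : Fin n → ℕ | ∑ i, a i * (x i : ℝ) < 1} with hS
  -- S is finite
  have hterm : ∀ m ∈ S, ∀ i, a i * (m i : ℝ) < 1 := by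
    intro m hm i
    refine lt_of_le_of_lt ?_ hm
    exact Finset.single_le_sum (f := fun j => a j * (m j : ℝ))
      (fun j _ => mul_nonneg (ha j).le (Nat.cast_nonneg _)) (Finset.mem_univ i)
  have hSfin : S.Finite := by
    have : S ⊆ Set.pi Set.univ (fun i => Set.Iic (Nat.floor (1 / a i))) := by
      intro m hm i _
      have h1 : (m i : ℝ) < 1 / a i := by
        rw [lt_div_iff₀ (ha i)]
        have := hterm m hm i
        linarith [hterm m hm i]
      exact Set.mem_Iic.mpr (Nat.le_floor h1.le)
    exact Set.Finite.subset (Set.Finite.pi fun i => Set.finite_Iic _) this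
  -- cubes
  set C : (Fin n → ℕ) → Set (Fin n → ℝ) :=
    fun m => Set.pi Set.univ (fun i => Set.Ico (m i : ℝ) ((m i : ℝ) + 1)) with hC
  have hvolC : ∀ m, MeasureTheory.volume (C m) = 1 := by
    intro m
    rw [hC]
    simp [MeasureTheory.volume_pi_pi, Real.volume_Ico]
  have hcover : {x : Fin n → ℝ | (∀ i, 0 ≤ x i) ∧ ∑ i, a i * x i < 1}
      ⊆ ⋃ m ∈ hSfin.toFinset, C m := by
    intro x hx
    obtain ⟨hx0, hx1⟩ := hx
    refine Set.mem_biUnion (x := fun i => Nat.floor (x i)) ?_ ?_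
    · show (fun i => Nat.floor (x i)) ∈ hSfin.toFinset
      rw [Set.Finite.mem_toFinset, hS]
      refine lt_of_le_of_lt ?_ hx1
      refine Finset.sum_le_sum fun i _ => ?_
      exact mul_le_mul_of_nonneg_left (Nat.floor_le (hx0 i)) (ha i).le
    · intro i _
      exact ⟨Nat.floor_le (hx0 i), Nat.lt_floor_add_one (x i)⟩
  calc MeasureTheory.volume {x : Fin n → ℝ | (∀ i, 0 ≤ x i) ∧ ∑ i, a i * x i < 1}
      ≤ MeasureTheory.volume (⋃ m ∈ hSfin.toFinset, C m) :=
        MeasureTheory.measure_mono hcover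
    _ ≤ ∑ m ∈ hSfin.toFinset, MeasureTheory.volume (C m) :=
        MeasureTheory.measure_biUnion_finset_le _ _
    _ = (S.ncard : ℝ≥0∞) := by
        simp only [hvolC, Finset.sum_const, nsmul_eq_mul, mul_one]
        rw [Set.ncard_eq_toFinset_card S hSfin]
end

section
/- Let n ≥ 2 be an integer and let a₁,…,aₙ be positive real numbers with a₁ + ⋯ + aₙ ≤ 1. Then the number of points x = (x₁,…,xₙ) with nonnegative integer coordinates satisfying ∑ᵢ aᵢxᵢ < 1 is strictly greater than nⁿ/n!. (In the paper's notation: σ̄_{n,1} > nⁿ/n! for n ≥ 2.) -/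
/-!
Replace `Q_a` by its symmetrization, the cross-polytope `∑ aᵢ|yᵢ| < 1` of volume
`2ⁿ / (n! ∏ aᵢ)`. Sending `y` to `(⌊|yᵢ|⌋)ᵢ` maps it into the lattice points of `Q_a`, and each
fibre of this map has volume at most `2ⁿ`, so there are at least `1 / (n! ∏ aᵢ)` lattice points.
The inequality is strict for `n ≥ 2`: if `x` maximizes `∑ aᵢxᵢ` over the lattice points then
`∑ aᵢxᵢ + a₁ ≥ 1`, hence `∑ aᵢ(xᵢ + 1) > 1` because `a₂ > 0`, and the fibre of `x` contains an
open set beyond the hyperplane `∑ aᵢyᵢ = 1` near its corner `x + 1`. Finally AM–GM gives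
`nⁿ ∏ aᵢ ≤ (∑ aᵢ)ⁿ ≤ 1`.
-/

open MeasureTheory Fintype
open scoped Nat

variable {ι : Type*} [Fintype ι]

theorem Real.card_pow_mul_prod_le_sum_pow {z : ι → ℝ} (hz : ∀ i, 0 ≤ z i) :
    (card ι : ℝ) ^ card ι * ∏ i, z i ≤ (∑ i, z i) ^ card ι := by
  rcases isEmpty_or_nonempty ι with hι | hι
  · simp
  have hn : (0 : ℝ) < card ι := by exact_mod_cast card_pos
  have amgm := Real.geom_mean_le_arith_mean_weighted Finset.univ (fun _ => 1 / (card ι : ℝ)) z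
    (fun _ _ => by positivity) (by simp [Finset.card_univ]) (fun i _ => hz i)
  have hroot : (∏ i, z i ^ (1 / (card ι : ℝ))) ^ card ι = ∏ i, z i := by
    rw [← Finset.prod_pow]
    refine Finset.prod_congr rfl fun i _ => ?_
    rw [← Real.rpow_natCast, ← Real.rpow_mul (hz i), one_div_mul_cancel hn.ne', Real.rpow_one]
  calc (card ι : ℝ) ^ card ι * ∏ i, z i
      = (card ι * ∏ i, z i ^ (1 / (card ι : ℝ))) ^ card ι := by rw [mul_pow, hroot]
    _ ≤ (card ι * ∑ i, 1 / (card ι : ℝ) * z i) ^ card ι := by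
      gcongr
      exact mul_nonneg hn.le (Finset.prod_nonneg fun i _ => Real.rpow_nonneg (hz i) _)
    _ = (∑ i, z i) ^ card ι := by
      rw [← Finset.mul_sum, ← mul_assoc, mul_one_div_cancel hn.ne', one_mul]

def simplexLatticePoints (a : ι → ℝ) : Set (ι → ℕ) := {x | ∑ i, a i * (x i : ℝ) < 1}

def crossPolytope (a : ι → ℝ) : Set (ι → ℝ) := {y | ∑ i, a i * |y i| < 1}

noncomputable def floorAbs (y : ι → ℝ) : ι → ℕ := fun i => ⌊|y i|⌋₊

variable {a : ι → ℝ}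

theorem finite_simplexLatticePoints (ha : ∀ i, 0 < a i) : (simplexLatticePoints a).Finite := by
  classical
  refine (Set.finite_Iic fun i => ⌈(a i)⁻¹⌉₊).subset fun x hx i => ?_
  have hterm : a i * x i ≤ ∑ j, a j * x j :=
    Finset.single_le_sum (fun j _ => mul_nonneg (ha j).le (Nat.cast_nonneg _)) (Finset.mem_univ i)
  have hxi : (x i : ℝ) ≤ (a i)⁻¹ := by
    rw [← one_div, le_div_iff₀' (ha i)]
    exact (hterm.trans_lt hx).le
  exact_mod_cast hxi.trans (Nat.le_ceil _)

theorem exists_mem_simplexLatticePoints_forall_one_le_add (ha : ∀ i, 0 < a i) :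
    ∃ x ∈ simplexLatticePoints a, ∀ i, 1 ≤ ∑ j, a j * x j + a i := by
  classical
  obtain ⟨x, hx, hmax⟩ := Set.exists_max_image _ (fun x : ι → ℕ => ∑ i, a i * (x i : ℝ))
    (finite_simplexLatticePoints ha) ⟨0, by simp [simplexLatticePoints]⟩
  refine ⟨x, hx, fun i => not_lt.1 fun hlt => ?_⟩
  set y : ι → ℕ := x + Pi.single i 1
  have hy : ∑ j, a j * y j = ∑ j, a j * x j + a i := by
    simp [y, mul_add, Finset.sum_add_distrib, Pi.single_apply]
  have := hmax y (show ∑ j, a j * (y j : ℝ) < 1 by rwa [hy])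
  rw [hy] at this
  linarith [ha i]

theorem volume_crossPolytope (ha : ∀ i, 0 < a i) :
    volume (crossPolytope a) = ENNReal.ofReal (2 ^ card ι / ((card ι)! * ∏ i, a i)) := by
  classical
  let f := Matrix.toLin' (Matrix.diagonal a)
  have hprod : 0 < ∏ i, a i := Finset.prod_pos fun i _ => ha i
  have hdet : LinearMap.det f = ∏ i, a i := by
    rw [LinearMap.det_toLin', Matrix.det_diagonal]
  have hpreim : crossPolytope a = f ⁻¹' {z | ∑ i, |z i| ^ (1 : ℝ) < 1} := by
    ext y
    simp [crossPolytope, f, Matrix.mulVec_diagonal, abs_mul, abs_of_pos (ha _)]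
  rw [hpreim, Measure.addHaar_preimage_linearMap _ (hdet ▸ hprod.ne'),
    volume_sum_rpow_lt_one _ le_rfl, hdet, abs_of_pos (inv_pos.2 hprod),
    ← ENNReal.ofReal_mul (inv_pos.2 hprod).le]
  congr 1
  simp only [div_one, one_add_one_eq_two, Real.Gamma_two, mul_one, Real.Gamma_nat_eq_factorial]
  field_simp

theorem volume_setOf_natFloor_abs_eq_le (k : ℕ) : volume {t : ℝ | ⌊|t|⌋₊ = k} ≤ 2 := by
  have hsub : {t : ℝ | ⌊|t|⌋₊ = k} ⊆ Set.Icc (-(k + 1 : ℝ)) (-k) ∪ Set.Icc (k : ℝ) (k + 1) := by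
    intro t (ht : ⌊|t|⌋₊ = k)
    rw [Nat.floor_eq_iff (abs_nonneg t)] at ht
    rcases abs_cases t with ⟨h, _⟩ | ⟨h, _⟩ <;> rw [h] at ht
    · exact Or.inr ⟨ht.1, ht.2.le⟩
    · exact Or.inl ⟨by linarith, by linarith⟩
  calc volume {t : ℝ | ⌊|t|⌋₊ = k}
      ≤ volume (Set.Icc (-(k + 1 : ℝ)) (-k)) + volume (Set.Icc (k : ℝ) (k + 1)) :=
        (measure_mono hsub).trans (measure_union_le _ _)
    _ = 2 := by simp [Real.volume_Icc, one_add_one_eq_two]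

theorem volume_floorAbs_preimage_singleton_le (x : ι → ℕ) :
    volume (floorAbs ⁻¹' {x}) ≤ 2 ^ card ι := by
  have hcell : floorAbs ⁻¹' {x} = Set.univ.pi fun i => {t : ℝ | ⌊|t|⌋₊ = x i} := by
    ext y
    simp [floorAbs, funext_iff]
  calc volume (floorAbs ⁻¹' {x}) = ∏ i, volume {t : ℝ | ⌊|t|⌋₊ = x i} := by
        rw [hcell, volume_pi_pi]
    _ ≤ ∏ _i : ι, 2 := Finset.prod_le_prod' fun i _ => volume_setOf_natFloor_abs_eq_le _
    _ = 2 ^ card ι := by simp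

theorem volume_floorAbs_preimage_le {L : Set (ι → ℕ)} (hL : L.Finite) :
    volume (floorAbs ⁻¹' L) ≤ L.ncard * 2 ^ card ι := by
  rw [← Set.biUnion_preimage_singleton, ← hL.coe_toFinset, Set.ncard_coe_finset]
  calc volume (⋃ x ∈ hL.toFinset, floorAbs ⁻¹' {x})
      ≤ ∑ x ∈ hL.toFinset, volume (floorAbs ⁻¹' {x}) := measure_biUnion_finset_le _ _
    _ ≤ ∑ _x ∈ hL.toFinset, 2 ^ card ι :=
        Finset.sum_le_sum fun x _ => volume_floorAbs_preimage_singleton_le x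
    _ = hL.toFinset.card * 2 ^ card ι := by rw [Finset.sum_const, nsmul_eq_mul]

theorem exists_mem_simplexLatticePoints_one_lt_add_sum [Nontrivial ι] (ha : ∀ i, 0 < a i) :
    ∃ x ∈ simplexLatticePoints a, 1 < ∑ i, a i * x i + ∑ i, a i := by
  classical
  obtain ⟨x, hx, hmax⟩ := exists_mem_simplexLatticePoints_forall_one_le_add ha
  obtain ⟨i, j, hij⟩ := exists_pair_ne ι
  have hpair : a i + a j ≤ ∑ k, a k := by
    rw [← Finset.sum_pair hij]
    exact Finset.sum_le_univ_sum_of_nonneg fun k => (ha k).le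
  exact ⟨x, hx, by linarith [hmax i, ha j]⟩

theorem exists_mem_Ioo_one_lt_sum_mul_add {x : ι → ℝ} (hx : ∑ i, a i * x i < 1)
    (hfar : 1 < ∑ i, a i * x i + ∑ i, a i) :
    ∃ t ∈ Set.Ioo (0 : ℝ) 1, 1 < ∑ i, a i * (x i + t) := by
  set s := ∑ i, a i * x i
  set S := ∑ i, a i
  have hS : 0 < S := by linarith
  obtain ⟨t, ht, ht1⟩ := exists_between ((div_lt_one hS).2 (show 1 - s < S by linarith))
  refine ⟨t, ⟨(div_pos (by linarith) hS).trans ht, ht1⟩, ?_⟩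
  have hsum : ∑ i, a i * (x i + t) = s + t * S := by
    simp only [mul_add, Finset.sum_add_distrib, s, S, Finset.sum_mul, mul_comm t]
  rw [hsum]
  linarith [(div_lt_iff₀ hS).1 ht]

theorem volume_crossPolytope_lt_volume_floorAbs_preimage [Nontrivial ι] (ha : ∀ i, 0 < a i) :
    volume (crossPolytope a) < volume (floorAbs ⁻¹' simplexLatticePoints a) := by
  obtain ⟨x, hx, hfar⟩ := exists_mem_simplexLatticePoints_one_lt_add_sum ha
  let U : Set (ι → ℝ) :=
    (Set.univ.pi fun i => Set.Ioo (x i : ℝ) (x i + 1)) ∩ {y | 1 < ∑ i, a i * y i}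
  have hU_open : IsOpen U :=
    (isOpen_set_pi Set.finite_univ fun i _ => isOpen_Ioo).inter
      (isOpen_lt continuous_const (by fun_prop))
  have hU_nonempty : U.Nonempty := by
    obtain ⟨t, ⟨ht0, ht1⟩, hbeyond⟩ := exists_mem_Ioo_one_lt_sum_mul_add hx hfar
    exact ⟨fun i => x i + t, fun i _ => ⟨by linarith, by linarith⟩, hbeyond⟩
  have hU_sub : U ⊆ floorAbs ⁻¹' simplexLatticePoints a \ crossPolytope a := by
    rintro y ⟨hbox, hbeyond : 1 < ∑ i, a i * y i⟩
    have habs : ∀ i, |y i| = y i := fun i =>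
      abs_of_pos ((Nat.cast_nonneg _).trans_lt (hbox i trivial).1)
    have hfloor : floorAbs y = x := funext fun i => by
      rw [floorAbs, habs, Nat.floor_eq_iff (abs_nonneg _ |>.trans_eq (habs i))]
      exact ⟨(hbox i trivial).1.le, (hbox i trivial).2⟩
    refine ⟨show floorAbs y ∈ _ by rwa [hfloor], fun (hy : ∑ i, a i * |y i| < 1) => ?_⟩
    simp only [habs] at hy
    linarith
  have hmeas : MeasurableSet (crossPolytope a) :=
    measurableSet_lt (by fun_prop) measurable_const
  have hfin : volume (crossPolytope a) ≠ ⊤ := by simp [volume_crossPolytope ha]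
  have hsub : crossPolytope a ⊆ floorAbs ⁻¹' simplexLatticePoints a := fun y hy =>
    lt_of_le_of_lt (Finset.sum_le_sum fun i _ =>
      mul_le_mul_of_nonneg_left (Nat.floor_le (abs_nonneg _)) (ha i).le) hy
  rw [← tsub_pos_iff_lt, ← measure_sdiff hsub hmeas.nullMeasurableSet hfin]
  exact (hU_open.measure_pos volume hU_nonempty).trans_le (measure_mono hU_sub)

theorem one_div_factorial_mul_prod_lt_ncard [Nontrivial ι] (ha : ∀ i, 0 < a i) :
    1 / ((card ι)! * ∏ i, a i) < (simplexLatticePoints a).ncard := by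
  have hprod : 0 < ∏ i, a i := Finset.prod_pos fun i _ => ha i
  have h := (volume_crossPolytope_lt_volume_floorAbs_preimage ha).trans_le
    (volume_floorAbs_preimage_le (finite_simplexLatticePoints ha))
  rw [volume_crossPolytope ha, ← ENNReal.ofReal_natCast, ← ENNReal.ofReal_ofNat 2,
    ← ENNReal.ofReal_pow zero_le_two, ← ENNReal.ofReal_mul (Nat.cast_nonneg _),
    ENNReal.ofReal_lt_ofReal_iff_of_nonneg (by positivity), div_eq_mul_one_div, mul_comm] at h
  exact lt_of_mul_lt_mul_right h (by positivity)

/-- σ̄_{n,1} > nⁿ/n! for n ≥ 2 : if a₁ + ⋯ + aₙ ≤ 1 with all aᵢ > 0 and n ≥ 2,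
then the number of lattice points x with ∑ aᵢxᵢ < 1 exceeds nⁿ/n!. -/
theorem stmt_7 (n : ℕ) (hn : 2 ≤ n) (a : Fin n → ℝ) (ha : ∀ i, 0 < a i)
    (h : ∑ i, a i ≤ 1) :
    (n : ℝ) ^ n / n.factorial <
      (Set.ncard {x : Fin n → ℕ | ∑ i, a i * (x i : ℝ) < 1} : ℝ) := by
  have : Nontrivial (Fin n) := Fin.nontrivial_iff_two_le.2 hn
  have hprod : 0 < ∏ i, a i := Finset.prod_pos fun i _ => ha i
  have hamgm : (n : ℝ) ^ n * ∏ i, a i ≤ 1 := by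
    simpa using (Real.card_pow_mul_prod_le_sum_pow fun i => (ha i).le).trans
      (pow_le_one₀ (Finset.sum_nonneg fun i _ => (ha i).le) h)
  calc (n : ℝ) ^ n / n ! ≤ 1 / (n ! * ∏ i, a i) := by
        rw [div_le_div_iff₀ (by positivity) (by positivity)]
        nlinarith [Nat.factorial_pos n]
    _ < (simplexLatticePoints a).ncard := by
        simpa only [Fintype.card_fin] using one_div_factorial_mul_prod_lt_ncard ha
end

section
/- Let r ≥ 2 and n be integers with n ≥ 6r. Then the binomial coefficient C(n+r, r−1) satisfies C(n+r, r−1) ≤ (n−r+1)^{n−r+1} / (n−r+1)!. -/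
/-!
Comparing one term of the binomial expansion of `(1 + 4) ^ (n + r)` with the whole sum gives
`C(n+r, r-1) * 4 ^ (n+1) ≤ 5 ^ (n+r)`, and `5 ^ 7 ≤ 2 ^ 17` turns this into
`C(n+r, r-1) ≤ 2 ^ (n-r)` once `n ≥ 6r`. On the other side, Bernoulli's inequality
`(1 + 1/m) ^ m ≥ 2` shows that `m ^ m / m!` at least doubles from `m` to `m + 1`, so
`m ^ m / m! ≥ 2 ^ (m-1)`; take `m = n - r + 1`.
-/

open Nat

theorem choose_mul_pow_mul_pow_le_add_pow {R : Type*} [CommSemiring R] [PartialOrder R]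
    [IsOrderedRing R] {x y : R} (hx : 0 ≤ x) (hy : 0 ≤ y) (N k : ℕ) :
    N.choose k * x ^ k * y ^ (N - k) ≤ (x + y) ^ N := by
  rcases le_or_gt k N with hk | hk
  · rw [add_pow]
    refine (Finset.single_le_sum (f := fun i ↦ x ^ i * y ^ (N - i) * N.choose i)
      (fun _ _ ↦ by positivity) (Finset.mem_range_succ_iff.mpr hk)).trans_eq' ?_
    ring
  · simpa [Nat.choose_eq_zero_of_lt hk] using pow_nonneg (add_nonneg hx hy) N

namespace Nat

theorem five_pow_add_le_two_pow_sub_mul_four_pow {r n : ℕ} (hn : 6 * r ≤ n) :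
    5 ^ (n + r) ≤ 2 ^ (n - r) * 4 ^ (n + 1) := by
  obtain ⟨d, rfl⟩ := Nat.exists_eq_add_of_le hn
  calc 5 ^ (6 * r + d + r) = (5 ^ 7) ^ r * 5 ^ d := by rw [← pow_mul, ← pow_add]; ring_nf
    _ ≤ (2 ^ 17) ^ r * (2 ^ 3) ^ d :=
      Nat.mul_le_mul (Nat.pow_le_pow_left (by norm_num) _) (Nat.pow_le_pow_left (by norm_num) _)
    _ = 2 ^ (17 * r + 3 * d) := by rw [← pow_mul, ← pow_mul, ← pow_add]
    _ ≤ 2 ^ (6 * r + d - r + 2 * (6 * r + d + 1)) := Nat.pow_le_pow_right (by norm_num) (by omega)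
    _ = 2 ^ (6 * r + d - r) * 4 ^ (6 * r + d + 1) := by rw [pow_add, pow_mul]; norm_num

theorem choose_add_sub_one_le_two_pow {r n : ℕ} (hn : 6 * r ≤ n) :
    (n + r).choose (r - 1) ≤ 2 ^ (n - r) := by
  rcases r with _ | r
  · simpa using Nat.one_le_two_pow
  have hterm := choose_mul_pow_mul_pow_le_add_pow zero_le_one (zero_le 4) (n + (r + 1)) r
  rw [one_pow, mul_one, show n + (r + 1) - r = n + 1 by omega] at hterm
  rw [Nat.add_sub_cancel]
  exact Nat.le_of_mul_le_mul_right
    (hterm.trans (five_pow_add_le_two_pow_sub_mul_four_pow hn)) (by positivity)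

theorem two_mul_pow_self_le_succ_pow {m : ℕ} (hm : m ≠ 0) : 2 * m ^ m ≤ (m + 1) ^ m := by
  have hbern := pow_add_mul_le_add_pow (a := m) (b := 1) (zero_le _) (zero_le _) m
  rwa [Nat.cast_id, mul_one, ← _root_.pow_succ', Nat.sub_add_cancel (one_le_iff_ne_zero.mpr hm),
    ← two_mul] at hbern

theorem factorial_mul_two_pow_sub_one_le_pow_self (m : ℕ) : m ! * 2 ^ (m - 1) ≤ m ^ m := by
  induction m with
  | zero => simp
  | succ m ih =>
    rcases m with _ | k
    · simp
    rw [Nat.add_sub_cancel] at ih ⊢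
    calc (k + 2)! * 2 ^ (k + 1) = (k + 2) * (2 * ((k + 1)! * 2 ^ k)) := by
          rw [Nat.factorial_succ, _root_.pow_succ]; ring
      _ ≤ (k + 2) * (2 * (k + 1) ^ (k + 1)) := by gcongr
      _ ≤ (k + 2) * (k + 2) ^ (k + 1) := by
          gcongr; exact two_mul_pow_self_le_succ_pow k.succ_ne_zero
      _ = (k + 2) ^ (k + 2) := (_root_.pow_succ' _ _).symm

end Nat

theorem stmt_8_general (r n : ℕ) (hn : 6 * r ≤ n) :
    ((n + r).choose (r - 1) : ℝ) ≤
      ((n - r + 1 : ℕ) : ℝ) ^ (n - r + 1) / ((n - r + 1).factorial : ℝ) := by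
  rw [le_div_iff₀ (by positivity)]
  have hchoose := choose_add_sub_one_le_two_pow hn
  have hfact : 2 ^ (n - r) * (n - r + 1)! ≤ (n - r + 1) ^ (n - r + 1) := by
    simpa [mul_comm] using factorial_mul_two_pow_sub_one_le_pow_self (n - r + 1)
  exact_mod_cast calc (n + r).choose (r - 1) * (n - r + 1)!
      ≤ 2 ^ (n - r) * (n - r + 1)! := by gcongr
    _ ≤ (n - r + 1) ^ (n - r + 1) := hfact

/-- Inequality (3.1): for r ≥ 2 and n ≥ 6r,
C(n+r, r−1) ≤ (n−r+1)^{n−r+1}/(n−r+1)!. -/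
theorem stmt_8 (r n : ℕ) (hr : 2 ≤ r) (hn : 6 * r ≤ n) :
    ((n + r).choose (r - 1) : ℝ) ≤
      ((n - r + 1 : ℕ) : ℝ) ^ (n - r + 1) / ((n - r + 1).factorial : ℝ) :=
  stmt_8_general r n hn
end

section
/- Let r ≥ 1 and n be integers with n ≥ 10r. Then the binomial coefficient C(n+r+1, 2r) satisfies C(n+r+1, 2r) < (n−2r+1)^{n−2r+1} / (n−2r+1)!. -/
/-!
Put `m = n - 2r + 1` and `N = n + r + 1 = m + 3r`. Multiplying by `m!`, split
`m! = (2r)! · (2r+1)⋯(4r) · (4r+1)⋯m`: the first factor turns `C(N, 2r)` into the falling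
factorial `N⋯(N-2r+1) ≤ N^{2r}`, the second is at most `(4r)^{2r}`, and the last is strictly
less than `m^{m-4r}`. Since `4r · N ≤ m²` once `m ≥ 6r`, the product is below `m^m`.
-/

namespace Nat

theorem factorial_two_mul_add_lt (k : ℕ) {s : ℕ} (hs : 2 ≤ s) :
    (2 * k + s)! < k ! * (2 * k) ^ k * (2 * k + s) ^ s := by
  have hlow : (2 * k)! ≤ k ! * (2 * k) ^ k := by
    rw [two_mul, ← factorial_mul_ascFactorial]
    exact Nat.mul_le_mul_left _ (ascFactorial_le_pow_add k k)
  calc (2 * k + s)! = (2 * k)! * (2 * k + 1).ascFactorial s :=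
        (factorial_mul_ascFactorial _ _).symm
    _ < (2 * k)! * (2 * k + s) ^ s :=
        Nat.mul_lt_mul_of_pos_left (ascFactorial_lt_pow_add _ hs) (factorial_pos _)
    _ ≤ k ! * (2 * k) ^ k * (2 * k + s) ^ s := Nat.mul_le_mul_right _ hlow

theorem choose_mul_factorial_two_mul_add_lt {N k s : ℕ} (hk : k ≤ N) (hs : 2 ≤ s) :
    N.choose k * (2 * k + s)! < (2 * k * N) ^ k * (2 * k + s) ^ s := by
  have hchoose : N.choose k * k ! ≤ N ^ k := by
    rw [mul_comm, ← descFactorial_eq_factorial_mul_choose]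
    exact descFactorial_le_pow N k
  calc N.choose k * (2 * k + s)!
      < N.choose k * (k ! * (2 * k) ^ k * (2 * k + s) ^ s) :=
        Nat.mul_lt_mul_of_pos_left (factorial_two_mul_add_lt k hs) (choose_pos hk)
    _ = N.choose k * k ! * (2 * k) ^ k * (2 * k + s) ^ s := by ring
    _ ≤ N ^ k * (2 * k) ^ k * (2 * k + s) ^ s := by gcongr
    _ = (2 * k * N) ^ k * (2 * k + s) ^ s := by ring

end Nat

/-- Inequality (3.2): for r ≥ 1 and n ≥ 10r,
C(n+r+1, 2r) < (n−2r+1)^{n−2r+1}/(n−2r+1)!. -/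
theorem stmt_9 (r n : ℕ) (hr : 1 ≤ r) (hn : 10 * r ≤ n) :
    ((n + r + 1).choose (2 * r) : ℝ) <
      ((n - 2 * r + 1 : ℕ) : ℝ) ^ (n - 2 * r + 1) / ((n - 2 * r + 1).factorial : ℝ) := by
  set m := n - 2 * r + 1
  obtain ⟨s, hm⟩ : ∃ s, m = 2 * (2 * r) + s := ⟨m - 4 * r, by omega⟩
  have hN : n + r + 1 = m + 3 * r := by omega
  have hsq : 2 * (2 * r) * (m + 3 * r) ≤ m ^ 2 := by nlinarith
  have key : (n + r + 1).choose (2 * r) * m.factorial < m ^ m :=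
    calc (n + r + 1).choose (2 * r) * m.factorial
        < (2 * (2 * r) * (m + 3 * r)) ^ (2 * r) * m ^ s := by
          rw [hN, hm]
          exact Nat.choose_mul_factorial_two_mul_add_lt (by omega) (by omega)
      _ ≤ (m ^ 2) ^ (2 * r) * m ^ s := by gcongr
      _ = m ^ m := by rw [← pow_mul, ← pow_add]; congr 1; omega
  rw [lt_div_iff₀ (by exact_mod_cast m.factorial_pos)]
  exact_mod_cast key
end
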